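/- Let f(x) = xᵀQx be a quadratic form with Q symmetric. If x* ∈ S^{n−1} satisfies ∇f(x*) = 2·f(x*)·x* and uᵀ∇²f(x*)u ≥ 2·f(x*) for all unit u ⟂ x*, then f(x*) is the smallest eigenvalue of Q, i.e., x* is a global minimizer of f on the unit sphere. -/
import Mathlib


open RealInnerProductSpace

/-- For a quadratic form `f(x) = xᵀQx` (`Q` symmetric), a point of the unit sphere
satisfying the first- and second-order necessary conditions is a global minimizer of
`f` on the unit sphere (its value is the smallest eigenvalue of `Q`). -/
theorem quadratic_sonc_global_min {n : ℕ}
    (Q : EuclideanSpace ℝ (Fin n) →L[ℝ] EuclideanSpace ℝ (Fin n))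
    (hQsym : ∀ v w : EuclideanSpace ℝ (Fin n), ⟪Q v, w⟫ = ⟪v, Q w⟫)
    (x : EuclideanSpace ℝ (Fin n)) (hx : ‖x‖ = 1)
    (hfo : Q x = (⟪Q x, x⟫ : ℝ) • x)
    (hsonc : ∀ u : EuclideanSpace ℝ (Fin n), ‖u‖ = 1 → ⟪u, x⟫ = 0 →
      (2 : ℝ) * ⟪Q u, u⟫ ≥ 2 * ⟪Q x, x⟫) :
    ∀ y : EuclideanSpace ℝ (Fin n), ‖y‖ = 1 → ⟪Q x, x⟫ ≤ ⟪Q y, y⟫ := by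
  intro y hy
  set lam : ℝ := ⟪Q x, x⟫ with hlam
  set c : ℝ := ⟪y, x⟫ with hc
  set u : EuclideanSpace ℝ (Fin n) := y - c • x with hu
  have hxx : (⟪x, x⟫ : ℝ) = 1 := by
    rw [real_inner_self_eq_norm_sq, hx]; ring
  have hux : (⟪u, x⟫ : ℝ) = 0 := by
    rw [hu, inner_sub_left, real_inner_smul_left, hxx]; ring
  have hyu : y = c • x + u := by rw [hu]; abel
  have hQxu : (⟪Q x, u⟫ : ℝ) = 0 := by
    rw [hfo, real_inner_smul_left, real_inner_comm u x, hux]; ring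
  have hQux : (⟪Q u, x⟫ : ℝ) = 0 := by
    rw [hQsym u x, real_inner_comm, hQxu]
  -- norm of u
  have hun : ‖u‖ ^ 2 = 1 - c ^ 2 := by
    have : (⟪u, u⟫ : ℝ) = 1 - c ^ 2 := by
      simp only [hu, inner_sub_left, inner_sub_right, real_inner_smul_left,
        real_inner_smul_right, hxx]
      rw [real_inner_self_eq_norm_sq, hy, real_inner_comm y x, ← hc]
      ring
    rw [← real_inner_self_eq_norm_sq, this]
  -- key: ⟪Q u, u⟫ ≥ ‖u‖² * lam
  have hkey : (⟪Q u, u⟫ : ℝ) ≥ ‖u‖ ^ 2 * lam := by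
    rcases eq_or_ne u 0 with h0 | h0
    · simp [h0]
    · set v : EuclideanSpace ℝ (Fin n) := ‖u‖⁻¹ • u with hv
      have hnu : ‖u‖ ≠ 0 := norm_ne_zero_iff.mpr h0
      have hv1 : ‖v‖ = 1 := by
        rw [hv, norm_smul, norm_inv, norm_norm, inv_mul_cancel₀ hnu]
      have hvx : (⟪v, x⟫ : ℝ) = 0 := by
        rw [hv, real_inner_smul_left, hux]; ring
      have := hsonc v hv1 hvx
      have hQvv : (⟪Q v, v⟫ : ℝ) = ‖u‖⁻¹ ^ 2 * ⟪Q u, u⟫ := by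
        rw [hv, map_smul, real_inner_smul_left, real_inner_smul_right]; ring
      rw [hQvv] at this
      have h2 : (‖u‖⁻¹ ^ 2) * ⟪Q u, u⟫ ≥ lam := by linarith
      have hp : (0:ℝ) < ‖u‖ ^ 2 := by positivity
      calc (⟪Q u, u⟫ : ℝ) = ‖u‖ ^ 2 * ((‖u‖⁻¹ ^ 2) * ⟪Q u, u⟫) := by
            field_simp
        _ ≥ ‖u‖ ^ 2 * lam := by nlinarith
  -- expand ⟪Q y, y⟫
  have hexp : (⟪Q y, y⟫ : ℝ) = c ^ 2 * lam + ⟪Q u, u⟫ := by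
    conv_lhs => rw [hyu]
    rw [map_add, map_smul, inner_add_left, inner_add_right, inner_add_right,
      real_inner_smul_left, real_inner_smul_left, real_inner_smul_right,
      real_inner_smul_right, ← hlam, hQxu, hQux]
    ring
  rw [hexp]
  rw [hun] at hkey
  nlinarith [hkey]
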